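/- arXiv:2105.06205 — 4 statements merged into one kernel-verified Lean document; each statement's English description precedes it below -/
import Mathlib

section
/- Let M = (−∞, 0] ⊂ ℝ, f(x) = −x, and u(x) = −e^{−x}. Then Δ_f u = u'' + u' = 0 on M, Ric_f = f'' = 0, the weighted mean curvature at the boundary point 0 is H_f = 1, the outer normal derivative u_ν at 0 equals 1 (hence nonnegative), but u is unbounded below on M and non-constant. -/
open Real Filter

theorem hasDerivAt_exp_neg (x : ℝ) : HasDerivAt (fun x => exp (-x)) (-exp (-x)) x := by
  simpa using (hasDerivAt_neg x).exp

theorem deriv_exp_neg : deriv (fun x : ℝ => exp (-x)) = fun x => -exp (-x) :=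
  funext fun x => (hasDerivAt_exp_neg x).deriv

theorem deriv_neg_exp_neg : deriv (fun x : ℝ => -exp (-x)) = fun x => exp (-x) :=
  funext fun x => by simpa using (hasDerivAt_exp_neg x).neg.deriv

theorem deriv_neg_id : deriv (fun x : ℝ => -x) = fun _ => -1 :=
  funext fun _ => deriv_neg'' _

theorem strictMono_neg_exp_neg : StrictMono fun x : ℝ => -exp (-x) :=
  (exp_strictMono.comp_strictAnti fun _ _ h => neg_lt_neg h).neg

theorem tendsto_neg_exp_neg_atBot : Tendsto (fun x : ℝ => -exp (-x)) atBot atBot :=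
  tendsto_neg_atTop_atBot.comp (tendsto_exp_atTop.comp tendsto_neg_atBot_atTop)

/-- On `M = (-∞, 0]` with `f(x) = -x` and `u(x) = -e^{-x}`: `Δ_f u = u'' + u' = 0`,
`Ric_f = f'' = 0`, `H_f = -f'(0) = 1`, `u_ν = u'(0) = 1 ≥ 0`, but `u` is unbounded
below on `M` and non-constant. -/
theorem unbounded_counterexample_halfline (f u : ℝ → ℝ)
    (hf : f = fun x => -x) (hu : u = fun x => -Real.exp (-x)) :
    (∀ x ≤ (0 : ℝ), deriv (deriv u) x - deriv f x * deriv u x = 0) ∧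
    (∀ x ≤ (0 : ℝ), deriv (deriv u) x + deriv u x = 0) ∧
    (∀ x ≤ (0 : ℝ), deriv (deriv f) x = 0) ∧
    (-(deriv f 0) * 1 = 1) ∧
    (deriv u 0 * 1 = 1) ∧
    (∀ C : ℝ, ∃ x ≤ (0 : ℝ), u x < C) ∧
    (∃ a ≤ (0 : ℝ), ∃ b ≤ (0 : ℝ), u a ≠ u b) := by
  subst hf hu
  refine ⟨?_, ?_, ?_, ?_, ?_, ?_, ?_⟩
  · intro x _
    simp only [deriv_neg_exp_neg, deriv_exp_neg, deriv_neg_id]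
    ring
  · intro x _
    simp only [deriv_neg_exp_neg, deriv_exp_neg]
    ring
  · intro x _
    simp only [deriv_neg_id, deriv_const]
  · simp only [deriv_neg_id]
    norm_num
  · simp only [deriv_neg_exp_neg]
    norm_num
  · intro C
    exact ((eventually_le_atBot 0).and (tendsto_neg_exp_neg_atBot.eventually_lt_atBot C)).exists
  · exact ⟨-1, by norm_num, 0, le_rfl, strictMono_neg_exp_neg.injective.ne (by norm_num)⟩
end

section
/- For every real α > 0, let M = (−∞, 0], f(x) = αx, and u(x) = e^{αx}. Then Δ_f u = u'' − α·u' = 0 on M, Ric_f = 0, u_ν(0) = α ≥ 0, u is bounded (0 < u ≤ 1) and non-constant, but H_f = −α < 0. -/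
lemma deriv_exp_mul (α : ℝ) :
    deriv (fun x => Real.exp (α * x)) = fun x => α * Real.exp (α * x) := by
  funext x
  have h : HasDerivAt (fun x => Real.exp (α * x)) (Real.exp (α * x) * α) x :=
    (Real.hasDerivAt_exp (α * x)).comp x
      (by simpa using (hasDerivAt_id x).const_mul α)
  simpa [mul_comm] using h.deriv

/-- For every `α > 0`, on `M = (-∞, 0]` with `f(x) = αx` and `u(x) = e^{αx}`:
`Δ_f u = u'' - α u' = 0`, `Ric_f = f'' = 0`, `u_ν(0) = α ≥ 0`, `u` is bounded
(`0 < u ≤ 1` on `M`) and non-constant, but `H_f = -f'(0) = -α < 0`. -/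
theorem meanCurvature_counterexample_one (α : ℝ) (hα : 0 < α) (f u : ℝ → ℝ)
    (hf : f = fun x => α * x) (hu : u = fun x => Real.exp (α * x)) :
    (∀ x ≤ (0 : ℝ), deriv (deriv u) x - α * deriv u x = 0) ∧
    (∀ x ≤ (0 : ℝ), deriv (deriv f) x = 0) ∧
    (deriv u 0 * 1 = α) ∧ (0 ≤ α) ∧
    (∀ x ≤ (0 : ℝ), 0 < u x ∧ u x ≤ 1) ∧
    (∃ a ≤ (0 : ℝ), ∃ b ≤ (0 : ℝ), u a ≠ u b) ∧
    (-(deriv f 0) * 1 = -α) ∧ (-α < 0) := by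
  subst hf hu
  have h1 : deriv (fun x => Real.exp (α * x)) = fun x => α * Real.exp (α * x) :=
    deriv_exp_mul α
  refine ⟨?_, ?_, ?_, hα.le, ?_, ?_, ?_, by linarith⟩
  · intro x _
    rw [h1]
    have : deriv (fun x => α * Real.exp (α * x)) x = α * (α * Real.exp (α * x)) := by
      rw [deriv_const_mul _ (by
        exact (Real.hasDerivAt_exp (α * x)).comp x
          (by simpa using (hasDerivAt_id x).const_mul α) |>.differentiableAt)]
      rw [congrFun h1 x]
    rw [this]; ring
  · intro x _
    have : deriv (fun x => α * x) = fun _ => α := by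
      funext y
      simpa using ((hasDerivAt_id y).const_mul α).deriv
    rw [this]
    simp
  · rw [h1]; simp
  · intro x hx
    constructor
    · exact Real.exp_pos _
    · have : α * x ≤ 0 := mul_nonpos_of_nonneg_of_nonpos hα.le hx
      simpa using Real.exp_le_one_iff.mpr this
  · refine ⟨-1, by norm_num, 0, le_refl 0, ?_⟩
    simp only [mul_neg_one, mul_zero, Real.exp_zero]
    intro h
    have := Real.exp_eq_one_iff (-α) |>.mp (by simpa using h)
    linarith
  · have : deriv (fun x => α * x) 0 = α := by
      simpa using ((hasDerivAt_id (0:ℝ)).const_mul α).deriv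
    rw [this, mul_one]
end

section
/- Let u : ℝ → ℝ be smooth and positive, let f : ℝ → ℝ be smooth, and suppose u'' − f'·u' = 0 (u is f-harmonic in one dimension). Set h := u^{7/8}. Then at every point the function |h'|² satisfies the Bochner-type inequality (1/2)(|h'|²)'' − (1/2) f'·(|h'|²)' ≥ ((7·1 − 6)/(49·1)) · |h'|⁴ / h² − (1/(7h))·h'·(|h'|²)' − (−f'')·|h'|², i.e. the inequality with K taken to be −f'', where Ric_f := f''. -/
/-- One-dimensional version (`n = 1`) of Brighton's Bochner-type inequality: if `u > 0`
is smooth and `f`-harmonic (`u'' - f' u' = 0`) and `h := u^{7/8}`, then pointwise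
`(1/2)Δ_f(|h'|²) ≥ (1/49)|h'|⁴/h² - (1/(7h)) h' (|h'|²)' + f'' |h'|²`,
where `Δ_f w := w'' - f' w'`. -/
theorem bochner_type_inequality_dim_one (u f : ℝ → ℝ)
    (hu : ContDiff ℝ (⊤ : ℕ∞) u) (hf : ContDiff ℝ (⊤ : ℕ∞) f) (hupos : ∀ x, 0 < u x)
    (hharm : ∀ x, deriv (deriv u) x - deriv f x * deriv u x = 0)
    (h : ℝ → ℝ) (hh : h = fun x => u x ^ ((7 : ℝ) / 8)) :
    ∀ x, (1 / 2) * (deriv (deriv (fun y => (deriv h y) ^ 2)) x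
        - deriv f x * deriv (fun y => (deriv h y) ^ 2) x)
      ≥ ((7 * 1 - 6 : ℝ) / (49 * 1)) * (deriv h x) ^ 4 / (h x) ^ 2
        - (1 / (7 * h x)) * deriv h x * deriv (fun y => (deriv h y) ^ 2) x
        + deriv (deriv f) x * (deriv h x) ^ 2 := by
  have hud : Differentiable ℝ u := hu.differentiable (by simp)
  have hu1 := (contDiff_infty_iff_deriv.mp (hu.of_le (by simp))).2
  have hud1 : Differentiable ℝ (deriv u) := hu1.differentiable (by simp)
  have hf1 := (contDiff_infty_iff_deriv.mp (hf.of_le (by simp))).2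
  have hfd1 : Differentiable ℝ (deriv f) := hf1.differentiable (by simp)
  have huu : ∀ x, deriv (deriv u) x = deriv f x * deriv u x := fun x => by
    have := hharm x; linarith
  -- first derivative of h
  have hdh : ∀ y, HasDerivAt h (deriv u y * ((7:ℝ)/8) * u y ^ ((7:ℝ)/8 - 1)) y := by
    intro y
    rw [hh]
    exact (hud y).hasDerivAt.rpow_const (Or.inl (hupos y).ne')
  have hdh' : deriv h = fun y => deriv u y * ((7:ℝ)/8) * u y ^ ((7:ℝ)/8 - 1) :=
    funext fun y => (hdh y).deriv
  have hdP : ∀ y, HasDerivAt (fun z => u z ^ ((7:ℝ)/8 - 1))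
      (deriv u y * ((7:ℝ)/8 - 1) * u y ^ ((7:ℝ)/8 - 1 - 1)) y :=
    fun y => (hud y).hasDerivAt.rpow_const (Or.inl (hupos y).ne')
  have hdQ : ∀ y, HasDerivAt (fun z => u z ^ ((7:ℝ)/8 - 1 - 1))
      (deriv u y * ((7:ℝ)/8 - 1 - 1) * u y ^ ((7:ℝ)/8 - 1 - 1 - 1)) y :=
    fun y => (hud y).hasDerivAt.rpow_const (Or.inl (hupos y).ne')
  have hv : ∀ y, HasDerivAt (deriv u) (deriv f y * deriv u y) y := by
    intro y
    have := (hud1 y).hasDerivAt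
    rwa [huu y] at this
  -- second derivative of h
  have hdh2 : ∀ y, HasDerivAt (deriv h)
      (deriv f y * deriv u y * ((7:ℝ)/8) * u y ^ ((7:ℝ)/8 - 1)
        + deriv u y * ((7:ℝ)/8) * (deriv u y * ((7:ℝ)/8 - 1) * u y ^ ((7:ℝ)/8 - 1 - 1))) y := by
    intro y
    rw [hdh']
    exact ((hv y).mul_const ((7:ℝ)/8)).mul (hdP y)
  -- first derivative of |h'|^2
  have hG : deriv (fun y => (deriv h y) ^ 2) = fun y =>
      2 * deriv h y * (deriv f y * deriv u y * ((7:ℝ)/8) * u y ^ ((7:ℝ)/8 - 1)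
        + deriv u y * ((7:ℝ)/8) * (deriv u y * ((7:ℝ)/8 - 1) * u y ^ ((7:ℝ)/8 - 1 - 1))) := by
    funext y
    have h2 := ((hdh2 y).fun_pow 2).deriv
    rw [h2]
    push_cast
    ring
  intro x
  have hU := hupos x
  have hw : HasDerivAt (deriv f) (deriv (deriv f) x) x := (hfd1 x).hasDerivAt
  -- second derivative of |h'|^2
  have hbig : HasDerivAt (fun z =>
      2 * deriv h z * (deriv f z * deriv u z * ((7:ℝ)/8) * u z ^ ((7:ℝ)/8 - 1)
        + deriv u z * ((7:ℝ)/8) * (deriv u z * ((7:ℝ)/8 - 1) * u z ^ ((7:ℝ)/8 - 1 - 1)))) _ x :=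
    (HasDerivAt.const_mul (2:ℝ) (hdh2 x)).mul
      (((((hw.fun_mul (hv x)).mul_const ((7:ℝ)/8)).mul (hdP x))).add
        ((((hv x).mul_const ((7:ℝ)/8)).mul
          ((((hv x).mul_const ((7:ℝ)/8 - 1)).mul (hdQ x))))))
  simp only [hG]
  rw [hbig.deriv]
  simp only [hdh']
  simp only [hh]
  -- rewrite rpow exponents down to a common one
  have e1 : u x ^ ((7:ℝ)/8) = u x ^ ((7:ℝ)/8 - 1) * u x := by
    rw [show ((7:ℝ)/8) = ((7:ℝ)/8 - 1) + 1 by ring, Real.rpow_add hU, Real.rpow_one]; norm_num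
  have e2 : u x ^ ((7:ℝ)/8 - 1) = u x ^ ((7:ℝ)/8 - 1 - 1) * u x := by
    rw [show ((7:ℝ)/8 - 1) = ((7:ℝ)/8 - 1 - 1) + 1 by ring, Real.rpow_add hU, Real.rpow_one]; norm_num
  have e3 : u x ^ ((7:ℝ)/8 - 1 - 1) = u x ^ ((7:ℝ)/8 - 1 - 1 - 1) * u x := by
    rw [show ((7:ℝ)/8 - 1 - 1) = ((7:ℝ)/8 - 1 - 1 - 1) + 1 by ring, Real.rpow_add hU,
      Real.rpow_one]; norm_num
  simp only [e1, e2, e3]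
  set p := u x ^ ((7:ℝ)/8 - 1 - 1 - 1) with hpdef
  set U := u x with hUdef
  set V := deriv u x with hVdef
  set w := deriv f x with hwdef
  set W := deriv (deriv f) x with hWdef
  have hp : 0 < p := Real.rpow_pos_of_pos hU _
  rw [ge_iff_le, ← sub_nonneg]
  have hE : (0:ℝ) ≤ ((7:ℝ)/8)^2/448 * (p * U * V)^2
      * ((7*V - 8*U*w)^2 + 384*(U*w)^2) := by positivity
  refine hE.trans (le_of_eq ?_)
  field_simp
  ring
end

section
/- Let u : ℝ → ℝ be smooth and positive, f : ℝ → ℝ smooth, with u'' = f'·u' (u is f-harmonic), and suppose f'' ≥ 0 (Ric_f ≥ 0 in one dimension). If u is bounded on ℝ, then u is constant. -/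
/-- Linear lower bound from a derivative lower bound on `[0, ∞)`. -/
lemma liouville_lin_lower (v : ℝ → ℝ) (K : ℝ) (hv : Differentiable ℝ v)
    (h : ∀ x > (0:ℝ), K ≤ deriv v x) : ∀ x ≥ (0:ℝ), v 0 + K * x ≤ v x := by
  intro x hx
  have hm : MonotoneOn (fun y => v y - K * y) (Set.Ici 0) := by
    apply monotoneOn_of_deriv_nonneg (convex_Ici 0)
    · exact (hv.continuous.sub (continuous_const.mul continuous_id)).continuousOn
    · intro y _
      exact ((hv y).sub (by fun_prop)).differentiableWithinAt
    · intro y hy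
      rw [interior_Ici] at hy
      have hK : deriv (fun y => K * y) y = K := by
        simpa using ((hasDerivAt_id y).const_mul K).deriv
      have hd : deriv (fun y => v y - K * y) y = deriv v y - K := by
        rw [deriv_fun_sub (hv y) (by fun_prop), hK]
      rw [hd]
      linarith [h y hy]
  have := hm Set.self_mem_Ici hx hx
  simp only [mul_zero, sub_zero] at this
  linarith

/-- One-dimensional Liouville theorem for weighted harmonic functions: if `u > 0` is
smooth with `u'' = f' u'` on `ℝ`, `f'' ≥ 0`, and `u` is bounded, then `u` is constant. -/
theorem liouville_dim_one (u f : ℝ → ℝ)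
    (hu : ContDiff ℝ (⊤ : ℕ∞) u) (hf : ContDiff ℝ (⊤ : ℕ∞) f) (hupos : ∀ x, 0 < u x)
    (hharm : ∀ x, deriv (deriv u) x = deriv f x * deriv u x)
    (hric : ∀ x, 0 ≤ deriv (deriv f) x)
    (hbdd : ∃ C : ℝ, ∀ x, |u x| ≤ C) :
    ∃ c : ℝ, u = fun _ => c := by
  have hu' : ContDiff ℝ (↑(⊤:ℕ∞)) u := hu.of_le (by simp)
  have hf' : ContDiff ℝ (↑(⊤:ℕ∞)) f := hf.of_le (by simp)
  obtain ⟨hud, hud2⟩ := contDiff_infty_iff_deriv.mp hu'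
  obtain ⟨hud', _⟩ := contDiff_infty_iff_deriv.mp hud2
  obtain ⟨hfd, hfd2⟩ := contDiff_infty_iff_deriv.mp hf'
  obtain ⟨hfd', _⟩ := contDiff_infty_iff_deriv.mp hfd2
  -- the ODE forces u' = C e^f for some constant C
  obtain ⟨C, key⟩ : ∃ C, ∀ x, deriv u x = C * Real.exp (f x) := by
    refine ⟨deriv u 0 * Real.exp (-f 0), ?_⟩
    have hg : ∀ x, HasDerivAt (fun x => deriv u x * Real.exp (-f x)) 0 x := by
      intro x
      have h1 : HasDerivAt (deriv u) (deriv (deriv u) x) x := (hud' x).hasDerivAt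
      have h2 : HasDerivAt (fun x => Real.exp (-f x))
          (Real.exp (-f x) * -(deriv f x)) x := ((hfd x).hasDerivAt.neg).exp
      have h3 : HasDerivAt (fun x => deriv u x * Real.exp (-f x)) _ x := h1.mul h2
      convert h3 using 1
      rw [hharm x]; ring
    have hconst : ∀ x, deriv u x * Real.exp (-f x)
        = deriv u 0 * Real.exp (-f 0) := by
      intro x
      exact is_const_of_deriv_eq_zero (f := fun x => deriv u x * Real.exp (-f x))
        (fun y => (hg y).differentiableAt) (fun y => (hg y).deriv) x 0
    intro x
    have h := hconst x
    have he : Real.exp (-f x) ≠ 0 := Real.exp_ne_zero _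
    rw [← h, mul_assoc, ← Real.exp_add]
    simp
  by_cases hC0 : C = 0
  · refine ⟨u 0, funext fun x => ?_⟩
    exact is_const_of_deriv_eq_zero hud (fun x => by rw [key x, hC0, zero_mul]) x 0
  · exfalso
    obtain ⟨B, hB⟩ := hbdd
    have hBpos : 0 ≤ B := le_trans (abs_nonneg _) (hB 0)
    have hmono : Monotone (deriv f) := monotone_of_deriv_nonneg hfd' hric
    set K := C * Real.exp (f 0) with hK
    have hexp : (0:ℝ) < Real.exp (f 0) := Real.exp_pos _
    clear_value K
    rcases le_or_gt 0 (deriv f 0) with ha | ha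
    · -- f nondecreasing on [0,∞): f x ≥ f 0 for x ≥ 0
      have hfge : ∀ x ≥ (0:ℝ), f 0 ≤ f x := by
        have := liouville_lin_lower f 0 hfd (fun x hx => le_trans ha (hmono hx.le))
        intro x hx; have := this x hx; linarith
      rcases lt_or_gt_of_ne hC0 with hCneg | hCpos
      · -- C < 0 : -u grows linearly with slope -K > 0
        have hKneg : K < 0 := by rw [hK]; exact mul_neg_of_neg_of_pos hCneg hexp
        have hgrow := liouville_lin_lower (fun y => -u y) (-K) (hud.neg)
          (fun x hx => by
            rw [deriv.fun_neg, key x]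
            have h1 : Real.exp (f 0) ≤ Real.exp (f x) :=
              Real.exp_le_exp.mpr (hfge x hx.le)
            rw [hK]; nlinarith)
        have hne : (-K) ≠ 0 := by linarith
        have hxpos : (0:ℝ) ≤ u 0 / -K + 1 := by
          have h2 : 0 ≤ u 0 / -K := div_nonneg (hupos 0).le (by linarith)
          linarith
        have h1 : -u 0 + -K * (u 0 / -K + 1) ≤ -u (u 0 / -K + 1) :=
          hgrow _ hxpos
        have hx' : -K * (u 0 / -K + 1) = u 0 + -K := by
          rw [mul_add, mul_one, mul_comm (-K), div_mul_cancel₀ _ hne]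
        have : (0:ℝ) < -u (u 0 / -K + 1) := by nlinarith
        linarith [hupos (u 0 / -K + 1)]
      · -- C > 0 : u grows linearly with slope K > 0
        have hKpos : 0 < K := by rw [hK]; exact mul_pos hCpos hexp
        have hgrow := liouville_lin_lower u K hud
          (fun x hx => by
            rw [key x]
            have h1 : Real.exp (f 0) ≤ Real.exp (f x) :=
              Real.exp_le_exp.mpr (hfge x hx.le)
            rw [hK]; nlinarith)
        have hxpos : (0:ℝ) ≤ (B + 1) / K := div_nonneg (by linarith) hKpos.le
        have h1 := hgrow _ hxpos
        have hx' : K * ((B + 1) / K) = B + 1 := by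
          rw [mul_comm, div_mul_cancel₀ _ (ne_of_gt hKpos)]
        have h2 : B + 1 ≤ u ((B + 1) / K) := by nlinarith [hupos 0]
        have := hB ((B + 1) / K)
        have := le_abs_self (u ((B + 1) / K))
        linarith
    · -- deriv f 0 < 0 : f (-y) ≥ f 0 for y ≥ 0; work with y ↦ u (-y)
      have hderiv_neg : ∀ y : ℝ, deriv (fun y => u (-y)) y = -deriv u (-y) := by
        intro y
        have h := ((hud (-y)).hasDerivAt.comp y (hasDerivAt_neg y))
        simpa [Function.comp_def] using h.deriv
      have hderiv_negf : ∀ y : ℝ, deriv (fun y => f (-y)) y = -deriv f (-y) := by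
        intro y
        have h := ((hfd (-y)).hasDerivAt.comp y (hasDerivAt_neg y))
        simpa [Function.comp_def] using h.deriv
      have hfge : ∀ y ≥ (0:ℝ), f 0 ≤ f (-y) := by
        have := liouville_lin_lower (fun y => f (-y)) 0
          (hfd.comp (differentiable_id.neg))
          (fun y hy => by
            rw [hderiv_negf y]
            have : deriv f (-y) ≤ deriv f 0 := hmono (by linarith)
            linarith)
        intro y hy; have := this y hy; simpa using this
      rcases lt_or_gt_of_ne hC0 with hCneg | hCpos
      · -- C < 0, K < 0 : u(-y) grows with slope -K > 0
        have hKneg : K < 0 := by rw [hK]; exact mul_neg_of_neg_of_pos hCneg hexp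
        have hgrow := liouville_lin_lower (fun y => u (-y)) (-K)
          (hud.comp (differentiable_id.neg))
          (fun y hy => by
            rw [hderiv_neg y, key (-y)]
            have h1 : Real.exp (f 0) ≤ Real.exp (f (-y)) :=
              Real.exp_le_exp.mpr (hfge y hy.le)
            rw [hK]; nlinarith)
        have hne : (-K) ≠ 0 := by linarith
        have hypos : (0:ℝ) ≤ (B + 1) / (-K) := div_nonneg (by linarith) (by linarith)
        have h1 : u (-(0:ℝ)) + -K * ((B + 1) / (-K)) ≤ u (-((B + 1) / (-K))) :=
          hgrow _ hypos
        rw [neg_zero] at h1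
        have hy' : -K * ((B + 1) / (-K)) = B + 1 := by
          rw [mul_comm, div_mul_cancel₀ _ hne]
        have h2 : B + 1 ≤ u (-((B + 1) / (-K))) := by nlinarith [hupos 0]
        have := hB (-((B + 1) / (-K)))
        have := le_abs_self (u (-((B + 1) / (-K))))
        linarith
      · -- C > 0, K > 0 : -u(-y) grows with slope K > 0
        have hKpos : 0 < K := by rw [hK]; exact mul_pos hCpos hexp
        have hgrow := liouville_lin_lower (fun y => -u (-y)) K
          ((hud.comp (differentiable_id.neg)).neg)
          (fun y hy => by
            have hrw : deriv (fun y => -u (-y)) y = deriv u (-y) := by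
              rw [deriv.fun_neg, hderiv_neg y]; ring
            rw [hrw, key (-y)]
            have h1 : Real.exp (f 0) ≤ Real.exp (f (-y)) :=
              Real.exp_le_exp.mpr (hfge y hy.le)
            rw [hK]; nlinarith)
        have hypos : (0:ℝ) ≤ u 0 / K + 1 := by
          have h2 : 0 ≤ u 0 / K := div_nonneg (hupos 0).le hKpos.le
          linarith
        have h1 : -u (-(0:ℝ)) + K * (u 0 / K + 1) ≤ -u (-(u 0 / K + 1)) :=
          hgrow _ hypos
        rw [neg_zero] at h1
        have hy' : K * (u 0 / K + 1) = u 0 + K := by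
          rw [mul_add, mul_one, mul_comm K, div_mul_cancel₀ _ (ne_of_gt hKpos)]
        have : (0:ℝ) < -u (-(u 0 / K + 1)) := by nlinarith
        linarith [hupos (-(u 0 / K + 1))]
end
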